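/- arXiv:1012.5783 — 2 statements merged into one kernel-verified Lean document; each statement's English description precedes it below -/
import Mathlib

section
/- For any continuous f: S^1 → ℝ^2 and any (u,v) ∈ Δ^+, the persistent homology group H_0^{u,v}(f) is finitely generated; equivalently the persistent Betti number rk H_0^{u,v}(f) is finite. -/
/-!
Since `u < v` in both coordinates, the open box `Iio v.1 ×ˢ Iio v.2` sits between `D^u` and
`D^v`, so its preimage `U` is an open set with `f⁻¹(D^u) ⊆ U ⊆ f⁻¹(D^v)`. The circle is locally
connected, so the components of `U` are open; finitely many of them cover the compact set
`f⁻¹(D^u)`, and each component of `f⁻¹(D^v)` meeting `f⁻¹(D^u)` contains one of these.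
-/

open Set Real Filter Topology

noncomputable section

abbrev Circ := AddCircle (2 * π)

def liftOf (F : Circ → ℝ × ℝ) : ℝ → ℝ × ℝ := fun t => F (t : Circ)

def IsC1 (F : Circ → ℝ × ℝ) : Prop := ContDiff ℝ 1 (liftOf F)

def tangentAt (F : Circ → ℝ × ℝ) (t : ℝ) : Submodule ℝ (ℝ × ℝ) :=
  Submodule.span ℝ {deriv (liftOf F) t}

def Generic (F : Circ → ℝ × ℝ) : Prop :=
  IsC1 F ∧ (∀ t : ℝ, deriv (liftOf F) t ≠ 0) ∧
  {p : ℝ × ℝ | ∃ x y : Circ, x ≠ y ∧ F x = p ∧ F y = p}.Finite ∧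
  (∀ p : ℝ × ℝ, (∃ x y : Circ, x ≠ y ∧ F x = p ∧ F y = p) →
    ∃ x y : Circ, x ≠ y ∧ {z : Circ | F z = p} = {x, y}) ∧
  (∀ t₁ t₂ : ℝ, liftOf F t₁ = liftOf F t₂ → tangentAt F t₁ = tangentAt F t₂ →
    (t₁ : Circ) = (t₂ : Circ))

def Dset (u : ℝ × ℝ) : Set (ℝ × ℝ) := {w | w.1 ≤ u.1 ∧ w.2 ≤ u.2}

def persBetti (F : Circ → ℝ × ℝ) (u v : ℝ × ℝ) : ℕ :=
  ((fun x => connectedComponentIn (F ⁻¹' Dset v) x) '' (F ⁻¹' Dset u)).ncard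

def Sigma2 : Set ((ℝ × ℝ) → (ℝ × ℝ)) :=
  {id, fun p => (-p.1, p.2), fun p => (p.1, -p.2), fun p => (-p.1, -p.2)}

def CircleDiffeo (H : Circ → Circ) : Prop :=
  ∃ h : ℝ → ℝ, ContDiff ℝ 1 h ∧ (∀ t, deriv h t ≠ 0) ∧
    ((∀ t, h (t + 2 * π) = h t + 2 * π) ∨ (∀ t, h (t + 2 * π) = h t - 2 * π)) ∧
    (∀ t : ℝ, H (t : Circ) = ((h t : ℝ) : Circ))

def C1dist (F G : Circ → ℝ × ℝ) : ℝ :=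
  ⨆ t : ℝ, (‖liftOf F t - liftOf G t‖ + ‖deriv (liftOf F) t - deriv (liftOf G) t‖)

def cross (a b : ℝ × ℝ) : ℝ := a.1 * b.2 - a.2 * b.1

instance AddCircle.locallyConnectedSpace (p : ℝ) : LocallyConnectedSpace (AddCircle p) :=
  isQuotientMap_quotient_mk'.isCoinducing.locallyConnectedSpace

theorem IsCompact.finite_image_connectedComponentIn {X : Type*} [TopologicalSpace X]
    [LocallyConnectedSpace X] {K U V : Set X} (hK : IsCompact K) (hU : IsOpen U)
    (hKU : K ⊆ U) (hUV : U ⊆ V) : (connectedComponentIn V '' K).Finite := by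
  obtain ⟨s, hs⟩ := hK.elim_finite_subcover (fun x : K => connectedComponentIn U x)
    (fun _ => hU.connectedComponentIn)
    (fun y hy => mem_iUnion.mpr ⟨⟨y, hy⟩, mem_connectedComponentIn (hKU hy)⟩)
  refine ((s.finite_toSet.image ((↑) : K → X)).image (connectedComponentIn V)).subset ?_
  rintro _ ⟨y, hy, rfl⟩
  obtain ⟨x, hxs, hyx⟩ := mem_iUnion₂.mp (hs hy)
  exact ⟨x, ⟨x, hxs, rfl⟩, connectedComponentIn_eq (connectedComponentIn_mono _ hUV hyx)⟩

theorem isClosed_Dset (u : ℝ × ℝ) : IsClosed (Dset u) :=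
  (isClosed_le continuous_fst continuous_const).inter (isClosed_le continuous_snd continuous_const)

theorem Dset_subset_Iio_prod_Iio {u v : ℝ × ℝ} (h1 : u.1 < v.1) (h2 : u.2 < v.2) :
    Dset u ⊆ Iio v.1 ×ˢ Iio v.2 :=
  fun _ hw => ⟨hw.1.trans_lt h1, hw.2.trans_lt h2⟩

theorem Iio_prod_Iio_subset_Dset (v : ℝ × ℝ) : Iio v.1 ×ˢ Iio v.2 ⊆ Dset v :=
  fun _ hw => ⟨hw.1.le, hw.2.le⟩

/-- For a continuous `f : S¹ → ℝ²` and `(u,v) ∈ Δ⁺`, the 0th persistent homology group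
is finitely generated: the set of connected components of `f⁻¹(D^v)` meeting `f⁻¹(D^u)`
is finite. -/
theorem persBetti_finite (F : Circ → ℝ × ℝ) (hF : Continuous F)
    (u v : ℝ × ℝ) (h1 : u.1 < v.1) (h2 : u.2 < v.2) :
    ((fun x => connectedComponentIn (F ⁻¹' Dset v) x) '' (F ⁻¹' Dset u)).Finite := by
  have : Fact (0 < 2 * π) := ⟨by positivity⟩
  exact ((isClosed_Dset u).preimage hF).isCompact.finite_image_connectedComponentIn
    ((isOpen_Iio.prod isOpen_Iio).preimage hF)
    (preimage_mono (Dset_subset_Iio_prod_Iio h1 h2))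
    (preimage_mono (Iio_prod_Iio_subset_Dset v))
end
end

section
/- Let f, g: S^1 → ℝ^2 be generic functions with f(S^1) = g(S^1). Then the map h: S^1 → S^1 defined by sending θ to the unique θ' with g(θ') = f(θ) when f(θ) is not a double point, and to the unique θ' with g(θ') = f(θ) and im d_{θ'} g = im d_θ f when f(θ) is a double point, is a well-defined C^1-diffeomorphism satisfying g∘h = f. -/
open Set Real Filter Topology

noncomputable section

/-!
A tangent-matching preimage of `F t₀` exists: preimages `s` of `F t` under `G` accumulate, as
`t → t₀`, at some `s₀` with `G s₀ = F t₀`, and the difference quotients of `F` at `t₀` and of `G`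
at `s₀` are multiples of the same chord, so in the limit `F' t₀ ∥ G' s₀`. Clean double points of
`G` make it unique, and those of `F` make the resulting map `H` injective. The graph of `H` is
closed in the compact `S¹ × S¹`, so `H` is continuous and lifts to `h : ℝ → ℝ`. Near each point
`h = (φ ∘ G)⁻¹ ∘ φ ∘ F` for a functional `φ` not killing `G'`, so `h` is C¹, and `G' · h' = F' ≠ 0`.
Finally `h (t + 2π) = h t + 2πn`, and `n = ±1` because otherwise `h` takes the value `h 0 ± 2π`
inside `(0, 2π)`, contradicting injectivity of `H`.
-/

open Function

instance : Fact ((0 : ℝ) < 2 * π) := ⟨two_pi_pos⟩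

lemma cross_smul_smul_self (c c' : ℝ) (d : ℝ × ℝ) : cross (c • d) (c' • d) = 0 := by
  simp only [cross, Prod.smul_fst, Prod.smul_snd, smul_eq_mul]
  ring

lemma continuous_cross : Continuous fun q : (ℝ × ℝ) × (ℝ × ℝ) => cross q.1 q.2 := by
  unfold cross
  fun_prop

lemma mem_span_singleton_of_cross_eq_zero {a b : ℝ × ℝ} (ha : a ≠ 0) (h : cross a b = 0) :
    b ∈ Submodule.span ℝ {a} := by
  have hpos : a.1 ^ 2 + a.2 ^ 2 ≠ 0 := by
    contrapose! ha
    ext <;> simp only [Prod.fst_zero, Prod.snd_zero] <;> nlinarith [sq_nonneg a.1, sq_nonneg a.2]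
  have h' : a.1 * b.2 - a.2 * b.1 = 0 := h
  refine Submodule.mem_span_singleton.mpr ⟨(a.1 * b.1 + a.2 * b.2) / (a.1 ^ 2 + a.2 ^ 2), ?_⟩
  ext <;> simp only [Prod.smul_fst, Prod.smul_snd, smul_eq_mul] <;> field_simp
  · linear_combination a.2 * h'
  · linear_combination -a.1 * h'

lemma span_singleton_eq_span_singleton_iff_cross_eq_zero {a b : ℝ × ℝ} (ha : a ≠ 0)
    (hb : b ≠ 0) : Submodule.span ℝ {a} = Submodule.span ℝ {b} ↔ cross a b = 0 := by
  refine ⟨fun h => ?_, fun h => le_antisymm ?_ ?_⟩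
  · obtain ⟨c, rfl⟩ := Submodule.mem_span_singleton.mp (h ▸ Submodule.mem_span_singleton_self b)
    simpa using cross_smul_smul_self 1 c a
  · refine Submodule.span_le.mpr (Set.singleton_subset_iff.mpr ?_)
    exact mem_span_singleton_of_cross_eq_zero hb (by unfold cross at h ⊢; linarith)
  · exact Submodule.span_le.mpr (Set.singleton_subset_iff.mpr
      (mem_span_singleton_of_cross_eq_zero ha h))

section Velocity

variable {F : Circ → ℝ × ℝ}

lemma liftOf_periodic (F : Circ → ℝ × ℝ) : Periodic (liftOf F) (2 * π) :=
  fun t => congrArg F (AddCircle.coe_add_period _ t)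

lemma deriv_liftOf_periodic (F : Circ → ℝ × ℝ) : Periodic (deriv (liftOf F)) (2 * π) := fun t => by
  rw [← deriv_comp_add_const, funext (liftOf_periodic F)]

def velocity (F : Circ → ℝ × ℝ) : Circ → ℝ × ℝ := (deriv_liftOf_periodic F).lift

lemma velocity_coe (F : Circ → ℝ × ℝ) (t : ℝ) : velocity F t = deriv (liftOf F) t :=
  (deriv_liftOf_periodic F).lift_coe t

lemma continuous_of_isC1 (hF : IsC1 F) : Continuous F :=
  (QuotientAddGroup.isQuotientMap_mk _).continuous_iff.mpr hF.continuous

lemma continuous_velocity (hF : IsC1 F) : Continuous (velocity F) :=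
  (QuotientAddGroup.isQuotientMap_mk _).continuous_iff.mpr <| by
    simpa only [comp_def, velocity_coe] using hF.continuous_deriv le_rfl

def tangentLine (F : Circ → ℝ × ℝ) (x : Circ) : Submodule ℝ (ℝ × ℝ) :=
  Submodule.span ℝ {velocity F x}

lemma tangentAt_eq_tangentLine (F : Circ → ℝ × ℝ) (t : ℝ) : tangentAt F t = tangentLine F t := by
  rw [tangentAt, tangentLine, velocity_coe]

lemma forall_tangentAt_eq_iff {G : Circ → ℝ × ℝ} {x y : Circ} :
    (∀ t s : ℝ, (t : Circ) = x → (s : Circ) = y → tangentAt F t = tangentAt G s) ↔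
      tangentLine F x = tangentLine G y := by
  simp only [tangentAt_eq_tangentLine]
  refine ⟨fun h => ?_, fun h t s ht hs => ht ▸ hs ▸ h⟩
  obtain ⟨t, rfl⟩ := QuotientAddGroup.mk_surjective x
  obtain ⟨s, rfl⟩ := QuotientAddGroup.mk_surjective y
  exact h t s rfl rfl

lemma velocity_ne_zero (hF : Generic F) (x : Circ) : velocity F x ≠ 0 := by
  obtain ⟨t, rfl⟩ := QuotientAddGroup.mk_surjective x
  exact velocity_coe F t ▸ hF.2.1 t

lemma tangentLine_eq_iff_cross_eq_zero {G : Circ → ℝ × ℝ} (hF : Generic F) (hG : Generic G)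
    {x y : Circ} : tangentLine F x = tangentLine G y ↔ cross (velocity F x) (velocity G y) = 0 :=
  span_singleton_eq_span_singleton_iff_cross_eq_zero (velocity_ne_zero hF x)
    (velocity_ne_zero hG y)

lemma Generic.eq_of_tangentLine_eq (hF : Generic F) {x y : Circ} (h : F x = F y)
    (h' : tangentLine F x = tangentLine F y) : x = y := by
  obtain ⟨t, rfl⟩ := QuotientAddGroup.mk_surjective x
  obtain ⟨s, rfl⟩ := QuotientAddGroup.mk_surjective y
  simp only [← tangentAt_eq_tangentLine] at h'
  exact hF.2.2.2.2 t s h h'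

end Velocity

section TangentMatch

lemma cross_eq_zero_of_comp_eq {f g : ℝ → ℝ × ℝ} {a b : ℝ × ℝ} {t₀ s₀ : ℝ}
    (hf : HasDerivAt f a t₀) (ha : a ≠ 0) (hg : HasDerivAt g b s₀) {τ σ : ℕ → ℝ}
    (hτ : Tendsto τ atTop (𝓝[≠] t₀)) (hσ : Tendsto σ atTop (𝓝 s₀))
    (hfg : ∀ n, g (σ n) = f (τ n)) (h₀ : g s₀ = f t₀) : cross a b = 0 := by
  have hq : Tendsto (fun n => slope f t₀ (τ n)) atTop (𝓝 a) :=
    (hasDerivAt_iff_tendsto_slope.mp hf).comp hτ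
  -- `f (τ n) ≠ f t₀` eventually, hence `σ n ≠ s₀` eventually
  have hσne : ∀ᶠ n in atTop, σ n ≠ s₀ := by
    filter_upwards [hq.eventually_ne ha] with n hn hσn
    simp [slope_def_module, ← hfg, hσn, h₀] at hn
  have hr : Tendsto (fun n => slope g s₀ (σ n)) atTop (𝓝 b) :=
    (hasDerivAt_iff_tendsto_slope.mp hg).comp (tendsto_nhdsWithin_iff.mpr ⟨hσ, hσne⟩)
  have hparallel : ∀ n, cross (slope f t₀ (τ n)) (slope g s₀ (σ n)) = 0 := fun n => by
    rw [slope_def_module, slope_def_module, hfg, h₀]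
    exact cross_smul_smul_self _ _ _
  exact tendsto_nhds_unique ((continuous_cross.tendsto _).comp (hq.prodMk_nhds hr))
    (by simp only [comp_def, hparallel, tendsto_const_nhds])

variable {F G : Circ → ℝ × ℝ}

lemma exists_tangentLine_eq (hF : Generic F) (hG : Generic G) (hrange : range F ⊆ range G)
    (x : Circ) : ∃ y, G y = F x ∧ tangentLine F x = tangentLine G y := by
  obtain ⟨t₀, rfl⟩ := QuotientAddGroup.mk_surjective x
  obtain ⟨τ, hτ⟩ := exists_seq_tendsto (𝓝[≠] t₀)
  have hpre : ∀ n, ∃ s ∈ Icc 0 (0 + 2 * π), liftOf G s = liftOf F (τ n) := fun n => by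
    obtain ⟨y, hy⟩ := hrange (mem_range_self (τ n : Circ))
    obtain ⟨s, hs, rfl⟩ := (AddCircle.coe_image_Icc_eq (2 * π) 0).symm ▸ mem_univ y
    exact ⟨s, hs, hy⟩
  choose σ hσI hσ using hpre
  obtain ⟨s₀, -, φ, hφ, hσφ⟩ := isCompact_Icc.tendsto_subseq hσI
  have hτφ : Tendsto (τ ∘ φ) atTop (𝓝[≠] t₀) := hτ.comp hφ.tendsto_atTop
  have hF1 := hF.1.differentiable one_ne_zero
  have hG1 := hG.1.differentiable one_ne_zero
  have h₀ : liftOf G s₀ = liftOf F t₀ := by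
    refine tendsto_nhds_unique ((hG.1.continuous.tendsto s₀).comp hσφ) ?_
    simp only [comp_def, hσ]
    exact (hF.1.continuous.tendsto t₀).comp (tendsto_nhds_of_tendsto_nhdsWithin hτφ)
  refine ⟨s₀, h₀, ?_⟩
  rw [tangentLine_eq_iff_cross_eq_zero hF hG, velocity_coe, velocity_coe]
  exact cross_eq_zero_of_comp_eq (hF1 t₀).hasDerivAt (hF.2.1 t₀) (hG1 s₀).hasDerivAt hτφ hσφ
    (fun n => hσ (φ n)) h₀

lemma existsUnique_tangentLine_eq (hF : Generic F) (hG : Generic G) (hrange : range F = range G)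
    (x : Circ) : ∃! y, G y = F x ∧ tangentLine F x = tangentLine G y := by
  obtain ⟨y, hy⟩ := exists_tangentLine_eq hF hG hrange.subset x
  exact ⟨y, hy, fun y' hy' => Generic.eq_of_tangentLine_eq hG (hy'.1.trans hy.1.symm)
    (hy'.2.symm.trans hy.2)⟩

end TangentMatch

lemma continuous_of_isClosed_graph {X Y : Type*} [TopologicalSpace X] [TopologicalSpace Y]
    [CompactSpace Y] {f : X → Y} (hf : IsClosed {q : X × Y | q.2 = f q.1}) : Continuous f := by
  refine continuous_iff_isClosed.mpr fun C hC => ?_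
  have hpre : f ⁻¹' C = Prod.fst '' ({q : X × Y | q.2 = f q.1} ∩ univ ×ˢ C) := by
    ext x
    exact ⟨fun hx => ⟨(x, f x), ⟨rfl, trivial, hx⟩, rfl⟩,
      by rintro ⟨⟨x, y⟩, ⟨hxy, -, hy⟩, rfl⟩; exact (show y = f x from hxy) ▸ hy⟩
  rw [hpre]
  exact isClosedMap_fst_of_compactSpace _ (hf.inter (isClosed_univ.prod hC))

section MatchingMap

variable {F G : Circ → ℝ × ℝ} {H : Circ → Circ}

lemma continuous_of_tangentLine_eq (hF : Generic F) (hG : Generic G)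
    (hH : ∀ x y, G y = F x ∧ tangentLine F x = tangentLine G y ↔ y = H x) : Continuous H := by
  refine continuous_of_isClosed_graph ?_
  have hgraph : {q : Circ × Circ | q.2 = H q.1} =
      {q | G q.2 = F q.1 ∧ cross (velocity F q.1) (velocity G q.2) = 0} := by
    ext q
    simp only [mem_ofPred_eq, ← hH, tangentLine_eq_iff_cross_eq_zero hF hG]
  rw [hgraph]
  exact (isClosed_eq ((continuous_of_isC1 hG.1).comp continuous_snd)
    ((continuous_of_isC1 hF.1).comp continuous_fst)).inter
    (isClosed_eq (continuous_cross.comp (((continuous_velocity hF.1).comp continuous_fst).prodMk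
      ((continuous_velocity hG.1).comp continuous_snd))) continuous_const)

lemma injective_of_tangentLine_eq (hF : Generic F)
    (hH : ∀ x, G (H x) = F x ∧ tangentLine F x = tangentLine G (H x)) : Injective H :=
  fun x y hxy => Generic.eq_of_tangentLine_eq hF ((hH x).1.symm.trans (hxy ▸ (hH y).1))
    ((hH x).2.trans (hxy ▸ (hH y).2.symm))

end MatchingMap

section Regularity

variable {E : Type*} [NormedAddCommGroup E] [NormedSpace ℝ E] {f g : ℝ → E} {h : ℝ → ℝ}

lemma contDiffAt_of_comp_eq {t₀ : ℝ} (hg : ContDiffAt ℝ 1 g (h t₀)) (hg' : deriv g (h t₀) ≠ 0)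
    (hf : ContDiffAt ℝ 1 f t₀) (hh : ContinuousAt h t₀) (hgh : ∀ t, g (h t) = f t) :
    ContDiffAt ℝ 1 h t₀ := by
  obtain ⟨φ, -, hφ⟩ := exists_dual_vector'' ℝ (deriv g (h t₀))
  have hℓ : ContDiffAt ℝ 1 (φ ∘ g) (h t₀) := φ.contDiff.contDiffAt.comp _ hg
  have hℓ' : HasDerivAt (φ ∘ g) (φ (deriv g (h t₀))) (h t₀) :=
    φ.hasFDerivAt.comp_hasDerivAt _ (hg.differentiableAt one_ne_zero).hasDerivAt
  have hne : φ (deriv g (h t₀)) ≠ 0 := by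
    rw [hφ]
    exact_mod_cast norm_ne_zero_iff.mpr hg'
  set Φ := hℓ.localInverse (hℓ'.hasFDerivAt_equiv hne) one_ne_zero
  have hleft : ∀ᶠ s in 𝓝 (h t₀), Φ (φ (g s)) = s :=
    (hℓ.hasStrictFDerivAt' (hℓ'.hasFDerivAt_equiv hne) one_ne_zero).eventually_left_inverse
  have hinv : ContDiffAt ℝ 1 Φ (φ (g (h t₀))) := hℓ.to_localInverse _ one_ne_zero
  have heq : h =ᶠ[𝓝 t₀] fun t => Φ (φ (f t)) :=
    (hh.eventually hleft).mono fun t ht => by simp only [← hgh, ht]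
  refine ContDiffAt.congr_of_eventuallyEq ?_ heq
  refine ContDiffAt.comp t₀ ?_ (φ.contDiff.contDiffAt.comp t₀ hf)
  rwa [hgh] at hinv

lemma deriv_ne_zero_of_comp_eq {t : ℝ} (hg : DifferentiableAt ℝ g (h t))
    (hh : DifferentiableAt ℝ h t) (hgh : ∀ t, g (h t) = f t) (hf : deriv f t ≠ 0) :
    deriv h t ≠ 0 := by
  have hchain := hg.hasDerivAt.scomp t hh.hasDerivAt
  rw [show g ∘ h = f from funext hgh] at hchain
  intro h0
  rw [hchain.deriv, h0, zero_smul] at hf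
  exact hf rfl

end Regularity

section Lifts

variable {p : ℝ}

lemma exists_continuous_lift {c : ℝ → AddCircle p} (hc : Continuous c) :
    ∃ h : ℝ → ℝ, Continuous h ∧ ∀ t, (h t : AddCircle p) = c t := by
  obtain ⟨e₀, he₀⟩ := QuotientAddGroup.mk_surjective (c 0)
  obtain ⟨h, -, hlift⟩ := ((AddCircle.isCoveringMap_coe p).existsUnique_continuousMap_lifts
    ⟨c, hc⟩ 0 e₀ he₀).exists
  exact ⟨h, h.continuous, congrFun hlift⟩

lemma exists_int_add_period {h : ℝ → ℝ} (hh : Continuous h)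
    (hper : ∀ t, (h (t + p) : AddCircle p) = h t) : ∃ n : ℤ, ∀ t, h (t + p) = h t + n * p := by
  obtain ⟨n, hn⟩ := (AddCircle.coe_eq_zero_iff p).mp
    (show ((h (0 + p) - h 0 : ℝ) : AddCircle p) = 0 by rw [AddCircle.coe_sub, hper, sub_self])
  rw [zsmul_eq_mul] at hn
  refine ⟨n, congrFun ((AddCircle.isCoveringMap_coe p).eq_of_comp_eq
    (hh.comp (continuous_add_const p)) (hh.add continuous_const) (funext fun t => ?_) 0 ?_)⟩
  · simp only [comp_apply, hper, ← zsmul_eq_mul, AddCircle.coe_add, AddCircle.coe_zsmul,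
      AddCircle.coe_period, smul_zero, add_zero]
  · show h (0 + p) = h 0 + n * p
    linarith

lemma injective_of_deriv_ne_zero {h : ℝ → ℝ} (hh : Continuous h) (h' : ∀ t, deriv h t ≠ 0) :
    Injective h := by
  intro a b hab
  by_contra hne
  rcases lt_or_gt_of_ne hne with hlt | hlt
  · obtain ⟨c, -, hc⟩ := exists_deriv_eq_zero hlt hh.continuousOn hab
    exact h' c hc
  · obtain ⟨c, -, hc⟩ := exists_deriv_eq_zero hlt hh.continuousOn hab.symm
    exact h' c hc

lemma eq_one_or_eq_neg_one_of_injective [hp : Fact (0 < p)] {H : AddCircle p → AddCircle p}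
    (hH : Injective H) {h : ℝ → ℝ} (hh : Continuous h) (hinj : Injective h)
    (hlift : ∀ t, (h t : AddCircle p) = H t) {n : ℤ} (hn : h p = h 0 + n * p) :
    n = 1 ∨ n = -1 := by
  have hp0 := hp.out
  have hn0 : n ≠ 0 := by
    rintro rfl
    exact hp0.ne' (hinj (by simpa using hn))
  have hmove : ∀ u ∈ Ioo 0 p, (h u : AddCircle p) ≠ h 0 := by
    intro u hu hcoe
    rw [hlift, hlift] at hcoe
    exact hu.1.ne' ((AddCircle.coe_eq_coe_iff_of_mem_Ico (a := 0)
      (by simpa using Ioo_subset_Ico_self hu) (by simpa using hp0)).mp (hH hcoe))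
  by_contra hne
  rcases le_or_gt 2 n with h2 | h2
  · have h2' : (2 : ℝ) ≤ n := by exact_mod_cast h2
    obtain ⟨u, hu, hu'⟩ := intermediate_value_Ioo hp0.le hh.continuousOn
      (show h 0 + p ∈ Ioo (h 0) (h p) from ⟨by linarith, by nlinarith⟩)
    exact hmove u hu (by rw [hu', AddCircle.coe_add_period])
  · have h2' : (n : ℝ) ≤ -2 := by exact_mod_cast (by omega : n ≤ -2)
    obtain ⟨u, hu, hu'⟩ := intermediate_value_Ioo' hp0.le hh.continuousOn
      (show h 0 - p ∈ Ioo (h p) (h 0) from ⟨by nlinarith, by linarith⟩)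
    exact hmove u hu (by rw [hu', AddCircle.coe_sub, AddCircle.coe_period, sub_zero])

end Lifts

lemma circleDiffeo_of_injective {H : Circ → Circ} (hH : Injective H) {h : ℝ → ℝ}
    (hC1 : ContDiff ℝ 1 h) (h' : ∀ t, deriv h t ≠ 0) (hlift : ∀ t, (h t : Circ) = H t) :
    CircleDiffeo H := by
  have hh := hC1.continuous
  obtain ⟨n, hn⟩ := exists_int_add_period hh fun t => by
    rw [hlift, hlift, AddCircle.coe_add_period]
  refine ⟨h, hC1, h', ?_, fun t => (hlift t).symm⟩
  rcases eq_one_or_eq_neg_one_of_injective hH hh (injective_of_deriv_ne_zero hh h') hlift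
    (by simpa using hn 0) with rfl | rfl
  · exact Or.inl fun t => by simpa using hn t
  · exact Or.inr fun t => by simpa [sub_eq_add_neg] using hn t

lemma contDiff_of_liftOf_comp_eq {F G : Circ → ℝ × ℝ} (hF : Generic F) (hG : Generic G)
    {h : ℝ → ℝ} (hh : Continuous h) (hGh : ∀ t, liftOf G (h t) = liftOf F t) :
    ContDiff ℝ 1 h ∧ ∀ t, deriv h t ≠ 0 := by
  have hC1 : ContDiff ℝ 1 h := contDiff_iff_contDiffAt.mpr fun t =>
    contDiffAt_of_comp_eq hG.1.contDiffAt (hG.2.1 _) hF.1.contDiffAt hh.continuousAt hGh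
  exact ⟨hC1, fun t => deriv_ne_zero_of_comp_eq (hG.1.differentiable one_ne_zero _)
    (hC1.differentiable one_ne_zero t) hGh (hF.2.1 t)⟩

/-- If `f, g` are generic with `f(S¹) = g(S¹)`, then the map `h` sending `θ` to the
unique `θ'` with `g(θ') = f(θ)` and matching tangent lines is a well-defined
C¹-diffeomorphism with `g ∘ h = f` (and it is the unique such map). -/
theorem construct_diffeo (F G : Circ → ℝ × ℝ)
    (hF : Generic F) (hG : Generic G) (hrange : Set.range F = Set.range G) :
    ∃ H : Circ → Circ, CircleDiffeo H ∧ G ∘ H = F ∧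
      (∀ x : Circ, ∀ t s : ℝ, ((t : ℝ) : Circ) = x → ((s : ℝ) : Circ) = H x →
        tangentAt F t = tangentAt G s) ∧
      (∀ H' : Circ → Circ,
        ((∀ x, G (H' x) = F x) ∧
         (∀ x : Circ, ∀ t s : ℝ, ((t : ℝ) : Circ) = x → ((s : ℝ) : Circ) = H' x →
            tangentAt F t = tangentAt G s)) → H' = H) := by
  choose H hH hHuniq using existsUnique_tangentLine_eq hF hG hrange
  have hHcont : Continuous H :=
    continuous_of_tangentLine_eq hF hG fun x y => ⟨hHuniq x y, fun hy => hy ▸ hH x⟩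
  obtain ⟨h, hh, hlift⟩ := exists_continuous_lift (c := fun t : ℝ => H t)
    (hHcont.comp (AddCircle.continuous_mk' _))
  obtain ⟨hC1, h'⟩ := contDiff_of_liftOf_comp_eq hF hG hh fun t =>
    (congrArg G (hlift t)).trans (hH t).1
  refine ⟨H, circleDiffeo_of_injective (injective_of_tangentLine_eq hF hH) hC1 h' hlift,
    funext fun x => (hH x).1, fun x => forall_tangentAt_eq_iff.mpr (hH x).2, ?_⟩
  rintro H' ⟨hH'G, hH'tan⟩
  exact funext fun x => hHuniq x _ ⟨hH'G x, forall_tangentAt_eq_iff.mp (hH'tan x)⟩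
end
end
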